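/- For every n ≥ 0, as r → 0⁺ one has Φ_n(r) − ln(1/r) [ I₀(γr) v_n(r) − I₁(γr) w_n(r) ] − ( ln(2/γ) − C + a_{n,1}/γ ) = O(r²); in particular the left-hand side tends to 0 as r → 0⁺ and is bounded in absolute value by a constant times r² near 0. -/
import Mathlib


open Real Filter

/-- `I₀(z) = Σ_{n=0}^∞ (z/2)^{2n}/(n!)²`. -/
noncomputable def besselI0 (z : ℝ) : ℝ :=
  ∑' n : ℕ, (z / 2) ^ (2 * n) / (Nat.factorial n : ℝ) ^ 2

/-- `I₁(z) = Σ_{n=0}^∞ (z/2)^{2n+1}/(n!(n+1)!)`. -/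
noncomputable def besselI1 (z : ℝ) : ℝ :=
  ∑' n : ℕ, (z / 2) ^ (2 * n + 1) / ((Nat.factorial n : ℝ) * (Nat.factorial (n + 1) : ℝ))

/-- `ψ(0) = 0`, `ψ(n) = Σ_{m=1}^n 1/m`. -/
noncomputable def psiHarm (n : ℕ) : ℝ := ∑ m ∈ Finset.Icc 1 n, (1 / m : ℝ)

/-- `K₀(z) = −(ln(z/2) + C) I₀(z) + Σ_{n=1}^∞ (ψ(n)/(n!)²) (z/2)^{2n}`. -/
noncomputable def besselK0 (z : ℝ) : ℝ :=
  -(Real.log (z / 2) + Real.eulerMascheroniConstant) * besselI0 z +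
    ∑' n : ℕ, psiHarm (n + 1) / (Nat.factorial (n + 1) : ℝ) ^ 2 * (z / 2) ^ (2 * (n + 1))

/-- `K₁(z) = 1/z + (ln(z/2) + C) I₁(z) − (1/2) Σ_{n=0}^∞ ((ψ(n+1)+ψ(n))/(n!(n+1)!)) (z/2)^{2n+1}`. -/
noncomputable def besselK1 (z : ℝ) : ℝ :=
  1 / z + (Real.log (z / 2) + Real.eulerMascheroniConstant) * besselI1 z -
    (1 / 2) * ∑' n : ℕ, (psiHarm (n + 1) + psiHarm n) /
      ((Nat.factorial n : ℝ) * (Nat.factorial (n + 1) : ℝ)) * (z / 2) ^ (2 * n + 1)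

/-- `β_n = κ²(n+1)/c²`. -/
noncomputable def betaC (κ c : ℝ) (n : ℕ) : ℝ := κ ^ 2 * (n + 1) / c ^ 2

/-- `γ = κ/c`. -/
noncomputable def gammaC (κ c : ℝ) : ℝ := κ / c

/-- `v_n(r) = Σ_{k=0}^{⌊n/2⌋} a_{n,2k} r^{2k}`. -/
noncomputable def vPoly (a : ℕ → ℕ → ℝ) (n : ℕ) (r : ℝ) : ℝ :=
  ∑ k ∈ Finset.range (n / 2 + 1), a n (2 * k) * r ^ (2 * k)

/-- `w_n(r) = Σ_{k=0}^{⌊(n−1)/2⌋} a_{n,2k+1} r^{2k+1}` (so `w₀ = 0` since `a_{0,1} = 0`). -/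
noncomputable def wPoly (a : ℕ → ℕ → ℝ) (n : ℕ) (r : ℝ) : ℝ :=
  ∑ k ∈ Finset.range ((n - 1) / 2 + 1), a n (2 * k + 1) * r ^ (2 * k + 1)

/-- `Φ_n(r) = K₀(γr) v_n(r) + K₁(γr) w_n(r)`. -/
noncomputable def PhiFund (γ : ℝ) (a : ℕ → ℕ → ℝ) (n : ℕ) (r : ℝ) : ℝ :=
  besselK0 (γ * r) * vPoly a n r + besselK1 (γ * r) * wPoly a n r

/-- `ṽ_n(r) = 2 Σ_{k=1}^{⌊n/2⌋} k a_{n,2k} r^{2k−1} − γ w_n(r)`. -/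
noncomputable def vTilde (γ : ℝ) (a : ℕ → ℕ → ℝ) (n : ℕ) (r : ℝ) : ℝ :=
  2 * ∑ k ∈ Finset.Icc 1 (n / 2), (k : ℝ) * a n (2 * k) * r ^ (2 * k - 1) - γ * wPoly a n r

/-- `w̃_n(r) = 2 Σ_{k=1}^{⌊(n−1)/2⌋} k a_{n,2k+1} r^{2k} − γ v_n(r)`. -/
noncomputable def wTilde (γ : ℝ) (a : ℕ → ℕ → ℝ) (n : ℕ) (r : ℝ) : ℝ :=
  2 * ∑ k ∈ Finset.Icc 1 ((n - 1) / 2), (k : ℝ) * a n (2 * k + 1) * r ^ (2 * k) -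
    γ * vPoly a n r

/-- `v̄_n(r) = 2 Σ_{k=1}^{⌊n/2⌋} k(2k−1) a_{n,2k} r^{2k−2}
  − γ Σ_{k=0}^{⌊(n−1)/2⌋} (2k+1) a_{n,2k+1} r^{2k} − γ w̃_n(r)`. -/
noncomputable def vBar (γ : ℝ) (a : ℕ → ℕ → ℝ) (n : ℕ) (r : ℝ) : ℝ :=
  2 * ∑ k ∈ Finset.Icc 1 (n / 2), (k : ℝ) * (2 * k - 1 : ℝ) * a n (2 * k) * r ^ (2 * k - 2) -
    γ * ∑ k ∈ Finset.range ((n - 1) / 2 + 1), (2 * k + 1 : ℝ) * a n (2 * k + 1) * r ^ (2 * k) -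
    γ * wTilde γ a n r

/-- `w̄_n(r) = 4 Σ_{k=1}^{⌊(n−1)/2⌋} k² a_{n,2k+1} r^{2k}
  − 2γ Σ_{k=1}^{⌊n/2⌋} k a_{n,2k} r^{2k} − γ r ṽ_n(r) − w̃_n(r)`. -/
noncomputable def wBar (γ : ℝ) (a : ℕ → ℕ → ℝ) (n : ℕ) (r : ℝ) : ℝ :=
  4 * ∑ k ∈ Finset.Icc 1 ((n - 1) / 2), (k : ℝ) ^ 2 * a n (2 * k + 1) * r ^ (2 * k) -
    2 * γ * ∑ k ∈ Finset.Icc 1 (n / 2), (k : ℝ) * a n (2 * k) * r ^ (2 * k) -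
    γ * r * vTilde γ a n r - wTilde γ a n r

-- AUX START

lemma psiHarm_nonneg (n : ℕ) : 0 ≤ psiHarm n :=
  Finset.sum_nonneg fun m _ => by positivity

lemma psiHarm_le (n : ℕ) : psiHarm n ≤ n := by
  have h : psiHarm n ≤ ∑ m ∈ Finset.Icc 1 n, (1:ℝ) := by
    apply Finset.sum_le_sum
    intro m hm
    have h1 : 1 ≤ m := (Finset.mem_Icc.mp hm).1
    rw [div_le_one (by exact_mod_cast h1)]
    exact_mod_cast h1
  simpa [Nat.card_Icc] using h

lemma summable_of_factbound (g : ℕ → ℝ) (M x : ℝ)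
    (h : ∀ n, |g n| ≤ M * (x ^ n / n.factorial)) : Summable g := by
  have h1 : Summable (fun n : ℕ => M * (x ^ n / n.factorial)) :=
    (Real.summable_pow_div_factorial x).mul_left M
  exact Summable.of_abs (Summable.of_nonneg_of_le (fun n => abs_nonneg _) h h1)

lemma one_le_fact (n : ℕ) : (1:ℝ) ≤ n.factorial := by exact_mod_cast n.factorial_pos

lemma summable_I0series (z : ℝ) :
    Summable (fun n : ℕ => (z/2)^(2*n) / (n.factorial:ℝ)^2) := by
  apply summable_of_factbound _ 1 ((z/2)^2)
  intro n
  have hn : (0:ℝ) ≤ (z/2)^(2*n) := Even.pow_nonneg (even_two_mul n) _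
  rw [one_mul, abs_of_nonneg (by positivity), ← pow_mul]
  apply div_le_div_of_nonneg_left hn (by positivity)
  calc (n.factorial:ℝ) ≤ (n.factorial:ℝ)^2 := le_self_pow₀ (one_le_fact n) (by norm_num)

lemma summable_I1series (z : ℝ) :
    Summable (fun n : ℕ => (z/2)^(2*n+1) / ((n.factorial:ℝ) * ((n+1).factorial:ℝ))) := by
  apply summable_of_factbound _ |z/2| ((z/2)^2)
  intro n
  have hfle : (n.factorial:ℝ) ≤ (n.factorial:ℝ) * ((n+1).factorial:ℝ) :=
    le_mul_of_one_le_right (by positivity) (one_le_fact (n+1))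
  have he : ((z/2)^2)^n = |z/2|^(2*n) := by
    rw [← pow_mul, ← Even.pow_abs (even_two_mul n)]
  rw [abs_div, abs_of_nonneg (by positivity : (0:ℝ) ≤ (n.factorial:ℝ) * ((n+1).factorial:ℝ)),
    pow_succ, abs_mul, abs_pow, he]
  calc |z/2|^(2*n) * |z/2| / ((n.factorial:ℝ) * ((n+1).factorial:ℝ))
      ≤ |z/2|^(2*n) * |z/2| / (n.factorial:ℝ) :=
        div_le_div_of_nonneg_left (by positivity) (by positivity) hfle
    _ = |z/2| * (|z/2|^(2*n) / n.factorial) := by ring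

lemma summable_S0series (z : ℝ) :
    Summable (fun n : ℕ => psiHarm (n+1) / ((n+1).factorial:ℝ)^2 * (z/2)^(2*(n+1))) := by
  apply summable_of_factbound _ ((z/2)^2) ((z/2)^2)
  intro n
  have hpow : (0:ℝ) ≤ (z/2)^(2*(n+1)) := Even.pow_nonneg (even_two_mul _) _
  have hco : psiHarm (n+1) / ((n+1).factorial:ℝ)^2 ≤ 1 / n.factorial := by
    have h1 : psiHarm (n+1) ≤ (n+1 : ℝ) := by exact_mod_cast psiHarm_le (n+1)
    have hf : ((n+1).factorial:ℝ) = (n+1) * n.factorial := by exact_mod_cast Nat.factorial_succ n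
    have h2 : ((n+1:ℝ)) * n.factorial ≤ ((n+1).factorial:ℝ)^2 := by
      have hx : (1:ℝ) ≤ (n+1:ℝ) * n.factorial :=
        one_le_mul_of_one_le_of_one_le (by exact_mod_cast Nat.le_add_left 1 n) (one_le_fact n)
      rw [hf]; nlinarith [hx]
    calc psiHarm (n+1) / ((n+1).factorial:ℝ)^2 ≤ (n+1:ℝ) / ((n+1:ℝ) * n.factorial) :=
          div_le_div₀ (by positivity) h1 (by positivity) h2
      _ = 1 / n.factorial := by
          rw [eq_div_iff (by positivity : (n.factorial:ℝ) ≠ 0)]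
          field_simp
  rw [abs_of_nonneg (mul_nonneg (div_nonneg (psiHarm_nonneg _) (by positivity)) hpow)]
  calc psiHarm (n+1) / ((n+1).factorial:ℝ)^2 * (z/2)^(2*(n+1))
      ≤ (1/n.factorial) * (z/2)^(2*(n+1)) := mul_le_mul_of_nonneg_right hco hpow
    _ = (z/2)^2 * (((z/2)^2)^n / n.factorial) := by
        rw [show 2*(n+1) = 2*n+2 from by ring, pow_add, ← pow_mul]; ring

lemma summable_S1series (z : ℝ) :
    Summable (fun n : ℕ =>
      (psiHarm (n+1) + psiHarm n) / ((n.factorial:ℝ) * ((n+1).factorial:ℝ)) * (z/2)^(2*n+1)) := by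
  apply summable_of_factbound _ (2*|z/2|) ((z/2)^2)
  intro n
  have hfn1 : (n+1:ℝ) ≤ ((n+1).factorial:ℝ) := by exact_mod_cast Nat.self_le_factorial (n+1)
  have hco0 : 0 ≤ (psiHarm (n+1) + psiHarm n) / ((n.factorial:ℝ) * ((n+1).factorial:ℝ)) :=
    div_nonneg (by linarith [psiHarm_nonneg n, psiHarm_nonneg (n+1)]) (by positivity)
  have hco : (psiHarm (n+1) + psiHarm n) / ((n.factorial:ℝ) * ((n+1).factorial:ℝ))
      ≤ 2 / n.factorial := by
    have h1 : psiHarm (n+1) ≤ (n+1:ℝ) := by exact_mod_cast psiHarm_le (n+1)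
    have h2 : psiHarm n ≤ (n:ℝ) := by exact_mod_cast psiHarm_le n
    have hd : (n+1:ℝ) * n.factorial ≤ (n.factorial:ℝ) * ((n+1).factorial:ℝ) := by
      nlinarith [one_le_fact n, (by positivity : (0:ℝ) < (n.factorial:ℝ))]
    calc (psiHarm (n+1) + psiHarm n) / ((n.factorial:ℝ) * ((n+1).factorial:ℝ))
        ≤ (2*(n+1:ℝ)) / ((n+1:ℝ) * n.factorial) :=
          div_le_div₀ (by positivity) (by linarith) (by positivity) hd
      _ = 2 / n.factorial := by
          rw [eq_div_iff (by positivity : (n.factorial:ℝ) ≠ 0)]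
          field_simp
  rw [abs_mul, abs_of_nonneg hco0]
  have hp : |(z/2)^(2*n+1)| = ((z/2)^2)^n * |z/2| := by
    rw [pow_succ, abs_mul, abs_pow, Even.pow_abs (even_two_mul n), pow_mul]
  rw [hp]
  calc (psiHarm (n+1) + psiHarm n) / ((n.factorial:ℝ) * ((n+1).factorial:ℝ)) *
        (((z/2)^2)^n * |z/2|)
      ≤ (2 / n.factorial) * (((z/2)^2)^n * |z/2|) :=
        mul_le_mul_of_nonneg_right hco (by positivity)
    _ = 2 * |z/2| * (((z/2)^2)^n / n.factorial) := by ring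

lemma tsum_le_geom {g : ℕ → ℝ} (hs : Summable g) {M : ℝ}
    (h : ∀ n, g n ≤ M * (1/4)^n) :
    ∑' n, g n ≤ M * (4/3) := by
  have hg : Summable (fun n : ℕ => M * (1/4:ℝ)^n) :=
    (summable_geometric_of_lt_one (by norm_num) (by norm_num)).mul_left M
  calc ∑' n, g n ≤ ∑' n, M * (1/4:ℝ)^n := Summable.tsum_le_tsum h hs hg
    _ = M * (4/3) := by
        rw [tsum_mul_left, tsum_geometric_of_lt_one (by norm_num) (by norm_num)]; norm_num

lemma pow_even_le {z : ℝ} (h0 : 0 ≤ z) (h1 : z ≤ 1) (n : ℕ) : (z/2)^(2*n) ≤ (1/4:ℝ)^n := by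
  rw [pow_mul]
  apply pow_le_pow_left₀ (by positivity)
  nlinarith

lemma I0_bounds {z : ℝ} (h0 : 0 ≤ z) (h1 : z ≤ 1) :
    0 ≤ besselI0 z - 1 ∧ besselI0 z - 1 ≤ z^2/3 := by
  have hs := summable_I0series z
  have hsh : Summable (fun n : ℕ => (z/2)^(2*(n+1)) / ((n+1).factorial:ℝ)^2) := by
    have h := (summable_nat_add_iff
      (f := fun n : ℕ => (z/2)^(2*n)/(n.factorial:ℝ)^2) 1).2 hs
    simpa using h
  have heq : besselI0 z - 1 = ∑' n : ℕ, (z/2)^(2*(n+1)) / ((n+1).factorial:ℝ)^2 := by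
    rw [besselI0, Summable.tsum_eq_zero_add hs]; simp
  have hterm : ∀ m : ℕ, (z/2)^(2*(m+1)) / ((m+1).factorial:ℝ)^2 ≤ (z^2/4) * (1/4:ℝ)^m := by
    intro m
    have hd : (z/2)^(2*(m+1)) / ((m+1).factorial:ℝ)^2 ≤ (z/2)^(2*(m+1)) :=
      div_le_self (Even.pow_nonneg (even_two_mul _) _)
        (by nlinarith [one_le_fact (m+1)] : (1:ℝ) ≤ ((m+1).factorial:ℝ)^2)
    have hp : (z/2)^(2*(m+1)) ≤ (z^2/4) * (1/4:ℝ)^m := by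
      rw [show 2*(m+1) = 2 + 2*m from by ring, pow_add]
      have e1 : (z/2)^2 = z^2/4 := by ring
      rw [e1]
      exact mul_le_mul_of_nonneg_left (pow_even_le h0 h1 m) (by positivity)
    linarith
  constructor
  · rw [heq]
    exact tsum_nonneg fun m => div_nonneg (Even.pow_nonneg (even_two_mul _) _) (by positivity)
  · rw [heq]
    calc (∑' m : ℕ, (z/2)^(2*(m+1)) / ((m+1).factorial:ℝ)^2) ≤ (z^2/4) * (4/3) :=
          tsum_le_geom hsh hterm
      _ = z^2/3 := by ring

lemma I1_bounds {z : ℝ} (h0 : 0 ≤ z) (h1 : z ≤ 1) :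
    0 ≤ besselI1 z ∧ besselI1 z ≤ 2*z/3 := by
  have hs := summable_I1series z
  have hnn : ∀ m : ℕ, 0 ≤ (z/2)^(2*m+1) / ((m.factorial:ℝ) * ((m+1).factorial:ℝ)) :=
    fun m => div_nonneg (pow_nonneg (by positivity) _) (by positivity)
  have hterm : ∀ m : ℕ,
      (z/2)^(2*m+1) / ((m.factorial:ℝ) * ((m+1).factorial:ℝ)) ≤ (z/2) * (1/4:ℝ)^m := by
    intro m
    have hd : (z/2)^(2*m+1) / ((m.factorial:ℝ) * ((m+1).factorial:ℝ)) ≤ (z/2)^(2*m+1) :=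
      div_le_self (pow_nonneg (by positivity) _)
        (one_le_mul_of_one_le_of_one_le (one_le_fact m) (one_le_fact (m+1)))
    have hp : (z/2)^(2*m+1) ≤ (z/2) * (1/4:ℝ)^m := by
      rw [pow_succ, mul_comm]
      exact mul_le_mul_of_nonneg_left (pow_even_le h0 h1 m) (by positivity)
    linarith
  constructor
  · exact tsum_nonneg hnn
  · calc besselI1 z ≤ (z/2) * (4/3) := tsum_le_geom hs hterm
      _ = 2*z/3 := by ring

lemma S0_bounds {z : ℝ} (h0 : 0 ≤ z) (h1 : z ≤ 1) :
    0 ≤ (∑' n : ℕ, psiHarm (n+1) / ((n+1).factorial:ℝ)^2 * (z/2)^(2*(n+1))) ∧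
    (∑' n : ℕ, psiHarm (n+1) / ((n+1).factorial:ℝ)^2 * (z/2)^(2*(n+1))) ≤ z^2/3 := by
  have hs := summable_S0series z
  have hnn : ∀ m : ℕ, 0 ≤ psiHarm (m+1) / ((m+1).factorial:ℝ)^2 * (z/2)^(2*(m+1)) :=
    fun m => mul_nonneg (div_nonneg (psiHarm_nonneg _) (by positivity))
      (Even.pow_nonneg (even_two_mul _) _)
  have hterm : ∀ m : ℕ,
      psiHarm (m+1) / ((m+1).factorial:ℝ)^2 * (z/2)^(2*(m+1)) ≤ (z^2/4) * (1/4:ℝ)^m := by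
    intro m
    have hfn1 : (m+1:ℝ) ≤ ((m+1).factorial:ℝ) := by exact_mod_cast Nat.self_le_factorial (m+1)
    have hco : psiHarm (m+1) / ((m+1).factorial:ℝ)^2 ≤ 1 := by
      rw [div_le_one (by positivity)]
      have hψ : psiHarm (m+1) ≤ (m+1:ℝ) := by exact_mod_cast psiHarm_le (m+1)
      nlinarith [one_le_fact (m+1)]
    have h2 : psiHarm (m+1) / ((m+1).factorial:ℝ)^2 * (z/2)^(2*(m+1)) ≤ (z/2)^(2*(m+1)) := by
      nlinarith [Even.pow_nonneg (even_two_mul (m+1)) (z/2),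
        div_nonneg (psiHarm_nonneg (m+1)) (by positivity : (0:ℝ) ≤ ((m+1).factorial:ℝ)^2)]
    have hp : (z/2)^(2*(m+1)) ≤ (z^2/4) * (1/4:ℝ)^m := by
      rw [show 2*(m+1) = 2 + 2*m from by ring, pow_add]
      have e1 : (z/2)^2 = z^2/4 := by ring
      rw [e1]
      exact mul_le_mul_of_nonneg_left (pow_even_le h0 h1 m) (by positivity)
    linarith
  exact ⟨tsum_nonneg hnn, by
    calc (∑' m : ℕ, psiHarm (m+1) / ((m+1).factorial:ℝ)^2 * (z/2)^(2*(m+1)))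
        ≤ (z^2/4) * (4/3) := tsum_le_geom hs hterm
      _ = z^2/3 := by ring⟩

lemma S1_bounds {z : ℝ} (h0 : 0 ≤ z) (h1 : z ≤ 1) :
    0 ≤ (∑' n : ℕ, (psiHarm (n+1) + psiHarm n) /
        ((n.factorial:ℝ) * ((n+1).factorial:ℝ)) * (z/2)^(2*n+1)) ∧
    (∑' n : ℕ, (psiHarm (n+1) + psiHarm n) /
        ((n.factorial:ℝ) * ((n+1).factorial:ℝ)) * (z/2)^(2*n+1)) ≤ 4*z/3 := by
  have hs := summable_S1series z
  have hnn : ∀ m : ℕ, 0 ≤ (psiHarm (m+1) + psiHarm m) /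
      ((m.factorial:ℝ) * ((m+1).factorial:ℝ)) * (z/2)^(2*m+1) :=
    fun m => mul_nonneg (div_nonneg
      (by linarith [psiHarm_nonneg m, psiHarm_nonneg (m+1)]) (by positivity))
      (pow_nonneg (by positivity) _)
  have hterm : ∀ m : ℕ, (psiHarm (m+1) + psiHarm m) /
      ((m.factorial:ℝ) * ((m+1).factorial:ℝ)) * (z/2)^(2*m+1) ≤ z * (1/4:ℝ)^m := by
    intro m
    have hfn1 : (m+1:ℝ) ≤ ((m+1).factorial:ℝ) := by exact_mod_cast Nat.self_le_factorial (m+1)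
    have hco : (psiHarm (m+1) + psiHarm m) / ((m.factorial:ℝ) * ((m+1).factorial:ℝ)) ≤ 2 := by
      rw [div_le_iff₀ (by positivity)]
      have h1 : psiHarm (m+1) ≤ (m+1:ℝ) := by exact_mod_cast psiHarm_le (m+1)
      have h2 : psiHarm m ≤ (m:ℝ) := by exact_mod_cast psiHarm_le m
      nlinarith [one_le_fact m]
    have hpnn : (0:ℝ) ≤ (z/2)^(2*m+1) := pow_nonneg (by positivity) _
    have h2 : (psiHarm (m+1) + psiHarm m) /
        ((m.factorial:ℝ) * ((m+1).factorial:ℝ)) * (z/2)^(2*m+1) ≤ 2 * (z/2)^(2*m+1) :=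
      mul_le_mul_of_nonneg_right hco hpnn
    have hp : (z/2)^(2*m+1) ≤ (z/2) * (1/4:ℝ)^m := by
      rw [pow_succ, mul_comm]
      exact mul_le_mul_of_nonneg_left (pow_even_le h0 h1 m) (by positivity)
    calc (psiHarm (m+1) + psiHarm m) /
        ((m.factorial:ℝ) * ((m+1).factorial:ℝ)) * (z/2)^(2*m+1)
        ≤ 2 * (z/2)^(2*m+1) := h2
      _ ≤ 2 * ((z/2) * (1/4:ℝ)^m) := mul_le_mul_of_nonneg_left hp (by norm_num)
      _ = z * (1/4:ℝ)^m := by ring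
  exact ⟨tsum_nonneg hnn, by
    calc (∑' m : ℕ, (psiHarm (m+1) + psiHarm m) /
          ((m.factorial:ℝ) * ((m+1).factorial:ℝ)) * (z/2)^(2*m+1))
        ≤ z * (4/3) := tsum_le_geom hs hterm
      _ = 4*z/3 := by ring⟩

noncomputable def S0sum (z : ℝ) : ℝ :=
  ∑' n : ℕ, psiHarm (n + 1) / (Nat.factorial (n + 1) : ℝ) ^ 2 * (z / 2) ^ (2 * (n + 1))
noncomputable def S1sum (z : ℝ) : ℝ :=
  ∑' n : ℕ, (psiHarm (n + 1) + psiHarm n) /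
    ((Nat.factorial n : ℝ) * (Nat.factorial (n + 1) : ℝ)) * (z / 2) ^ (2 * n + 1)

lemma besselK0_eq (z : ℝ) : besselK0 z =
    -(Real.log (z / 2) + Real.eulerMascheroniConstant) * besselI0 z + S0sum z := rfl
lemma besselK1_eq (z : ℝ) : besselK1 z =
    1 / z + (Real.log (z / 2) + Real.eulerMascheroniConstant) * besselI1 z -
      (1 / 2) * S1sum z := rfl

lemma poly_bound (b : ℕ → ℝ) (s : Finset ℕ) (e : ℕ → ℕ) (p : ℕ) (he : ∀ k ∈ s, p ≤ e k)
    {r : ℝ} (h0 : 0 ≤ r) (h1 : r ≤ 1) :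
    |∑ k ∈ s, b k * r ^ e k| ≤ (∑ k ∈ s, |b k|) * r ^ p := by
  calc |∑ k ∈ s, b k * r ^ e k| ≤ ∑ k ∈ s, |b k * r ^ e k| := Finset.abs_sum_le_sum_abs _ _
    _ ≤ ∑ k ∈ s, |b k| * r ^ p := by
        apply Finset.sum_le_sum
        intro k hk
        rw [abs_mul, abs_pow, abs_of_nonneg h0]
        exact mul_le_mul_of_nonneg_left (pow_le_pow_of_le_one h0 h1 (he k hk)) (abs_nonneg _)
    _ = (∑ k ∈ s, |b k|) * r ^ p := (Finset.sum_mul _ _ _).symm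

lemma key_identity (γ r : ℝ) (hγ : 0 < γ) (hr : 0 < r) (a : ℕ → ℕ → ℝ) (n : ℕ) :
    PhiFund γ a n r -
      Real.log (1 / r) * (besselI0 (γ * r) * vPoly a n r - besselI1 (γ * r) * wPoly a n r) -
      (Real.log (2 / γ) - Real.eulerMascheroniConstant + a n 1 / γ)
    = (Real.log (2 / γ) - Real.eulerMascheroniConstant) *
        (besselI0 (γ * r) * vPoly a n r - besselI1 (γ * r) * wPoly a n r - 1) +
      S0sum (γ * r) * vPoly a n r +
      ((∑ k ∈ Finset.range ((n - 1) / 2 + 1), a n (2 * k + 1) * r ^ (2 * k)) - a n 1) / γ -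
      (1 / 2) * S1sum (γ * r) * wPoly a n r := by
  have hw : wPoly a n r =
      r * ∑ k ∈ Finset.range ((n - 1) / 2 + 1), a n (2 * k + 1) * r ^ (2 * k) := by
    rw [wPoly, Finset.mul_sum]
    exact Finset.sum_congr rfl fun k _ => by ring
  have hlog : Real.log (γ * r / 2) + Real.eulerMascheroniConstant
      = -(Real.log (1 / r) + (Real.log (2 / γ) - Real.eulerMascheroniConstant)) := by
    rw [Real.log_div (by positivity) (by norm_num), Real.log_mul hγ.ne' hr.ne',
      Real.log_div (by norm_num) hγ.ne', Real.log_div one_ne_zero hr.ne', Real.log_one]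
    ring
  rw [PhiFund, besselK0_eq, besselK1_eq, hlog, hw]
  field_simp
  ring

-- AUX END

/-- As `r → 0⁺`,
`Φ_n(r) − ln(1/r)[I₀(γr) v_n(r) − I₁(γr) w_n(r)] − (ln(2/γ) − C + a_{n,1}/γ) = O(r²)`:
there are `δ > 0` and `c₀ ≥ 0` bounding the left-hand side by `c₀ r²` for `0 < r < δ`. -/
theorem stmt_15
    (κ c : ℝ) (hκ : 0 < κ) (hc : 0 < c) (a : ℕ → ℕ → ℝ)
    (ha0 : ∀ n : ℕ, a n 0 = 1)
    (hann : ∀ n : ℕ, 1 ≤ n →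
      a n n = -(betaC κ c 1 * a (n - 1) (n - 1)) / (2 * gammaC κ c * n))
    (hrec : ∀ n k : ℕ, 1 ≤ k → k ≤ n - 1 →
      a n k = (1 / (2 * gammaC κ c * k)) *
        (4 * (((k + 1) / 2 : ℕ) : ℝ) ^ 2 * a n (k + 1) -
          ∑ m ∈ Finset.Icc (k - 1) (n - 1), betaC κ c (n - m) * a m (k - 1)))
    (hzero : ∀ n k : ℕ, n < k → a n k = 0)
    (n : ℕ) :
    ∃ δ : ℝ, 0 < δ ∧ ∃ c₀ : ℝ, 0 ≤ c₀ ∧ ∀ r : ℝ, 0 < r → r < δ →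
      |PhiFund (gammaC κ c) a n r -
          Real.log (1 / r) *
            (besselI0 (gammaC κ c * r) * vPoly a n r -
              besselI1 (gammaC κ c * r) * wPoly a n r) -
          (Real.log (2 / gammaC κ c) - Real.eulerMascheroniConstant + a n 1 / gammaC κ c)| ≤
        c₀ * r ^ 2 := by
  have hγ : 0 < gammaC κ c := div_pos hκ hc
  set γ := gammaC κ c with hγdef
  set A := ∑ k ∈ Finset.range (n/2+1), |a n (2*k)| with hAdef
  set A₂ := ∑ k ∈ Finset.range (n/2), |a n (2*(k+1))| with hA2def
  set B := ∑ k ∈ Finset.range ((n-1)/2+1), |a n (2*k+1)| with hBdef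
  set B₂ := ∑ k ∈ Finset.range ((n-1)/2), |a n (2*(k+1)+1)| with hB2def
  have hA0 : 0 ≤ A := Finset.sum_nonneg fun _ _ => abs_nonneg _
  have hA20 : 0 ≤ A₂ := Finset.sum_nonneg fun _ _ => abs_nonneg _
  have hB0 : 0 ≤ B := Finset.sum_nonneg fun _ _ => abs_nonneg _
  have hB20 : 0 ≤ B₂ := Finset.sum_nonneg fun _ _ => abs_nonneg _
  have hLa : 0 ≤ |Real.log (2/γ) - Real.eulerMascheroniConstant| := abs_nonneg _
  have hc₀ : 0 ≤ |Real.log (2/γ) - Real.eulerMascheroniConstant| *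
      (A*γ^2/3 + A₂ + 2*γ*B/3) + A*γ^2/3 + B₂/γ + 2*γ*B/3 := by
    have t1 : 0 ≤ A*γ^2/3 := div_nonneg (mul_nonneg hA0 (sq_nonneg γ)) (by norm_num)
    have t2 : 0 ≤ 2*γ*B/3 :=
      div_nonneg (mul_nonneg (mul_nonneg (by norm_num) hγ.le) hB0) (by norm_num)
    have t3 : 0 ≤ B₂/γ := div_nonneg hB20 hγ.le
    have t4 : 0 ≤ |Real.log (2/γ) - Real.eulerMascheroniConstant| *
        (A*γ^2/3 + A₂ + 2*γ*B/3) := mul_nonneg hLa (by linarith)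
    linarith
  refine ⟨min 1 (1/γ), lt_min one_pos (by positivity),
    |Real.log (2/γ) - Real.eulerMascheroniConstant| * (A*γ^2/3 + A₂ + 2*γ*B/3) +
      A*γ^2/3 + B₂/γ + 2*γ*B/3, hc₀, ?_⟩
  intro r hr hrδ
  have hr1 : r < 1 := lt_of_lt_of_le hrδ (min_le_left _ _)
  have hz1 : γ * r ≤ 1 := by
    have h2 : r < 1/γ := lt_of_lt_of_le hrδ (min_le_right _ _)
    have h3 : r * γ < 1 := (lt_div_iff₀ hγ).1 h2
    nlinarith
  have hz0 : 0 ≤ γ * r := by positivity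
  rw [key_identity γ r hγ hr a n]
  -- polynomial bounds
  have hv : |vPoly a n r| ≤ A := by
    rw [hAdef, vPoly]
    have h := poly_bound (fun k => a n (2*k)) (Finset.range (n/2+1)) (fun k => 2*k) 0
      (fun k _ => Nat.zero_le _) hr.le hr1.le
    simpa using h
  have hv1 : |vPoly a n r - 1| ≤ A₂ * r^2 := by
    have hsplit : vPoly a n r =
        (∑ k ∈ Finset.range (n/2), a n (2*(k+1)) * r^(2*(k+1))) + 1 := by
      rw [vPoly, Finset.sum_range_succ']
      simp [ha0 n]
    rw [hsplit, add_sub_cancel_right, hA2def]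
    have h := poly_bound (fun k => a n (2*(k+1))) (Finset.range (n/2)) (fun k => 2*(k+1)) 2
      (fun k _ => by show 2 ≤ 2*(k+1); omega) hr.le hr1.le
    simpa using h
  have hwq : |∑ k ∈ Finset.range ((n-1)/2+1), a n (2*k+1) * r^(2*k)| ≤ B := by
    rw [hBdef]
    have h := poly_bound (fun k => a n (2*k+1)) (Finset.range ((n-1)/2+1)) (fun k => 2*k) 0
      (fun k _ => Nat.zero_le _) hr.le hr1.le
    simpa using h
  have hwq1 : |(∑ k ∈ Finset.range ((n-1)/2+1), a n (2*k+1) * r^(2*k)) - a n 1| ≤ B₂ * r^2 := by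
    have hsplit : (∑ k ∈ Finset.range ((n-1)/2+1), a n (2*k+1) * r^(2*k)) =
        (∑ k ∈ Finset.range ((n-1)/2), a n (2*(k+1)+1) * r^(2*(k+1))) + a n 1 := by
      rw [Finset.sum_range_succ']
      simp
    rw [hsplit, add_sub_cancel_right, hB2def]
    have h := poly_bound (fun k => a n (2*(k+1)+1)) (Finset.range ((n-1)/2))
      (fun k => 2*(k+1)) 2 (fun k _ => by show 2 ≤ 2*(k+1); omega) hr.le hr1.le
    simpa using h
  have hwabs : |wPoly a n r| ≤ B * r := by
    rw [hBdef, wPoly]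
    have h := poly_bound (fun k => a n (2*k+1)) (Finset.range ((n-1)/2+1)) (fun k => 2*k+1) 1
      (fun k _ => by show 1 ≤ 2*k+1; omega) hr.le hr1.le
    simpa using h
  -- series bounds
  obtain ⟨hI0a, hI0b⟩ := I0_bounds hz0 hz1
  obtain ⟨hI1a, hI1b⟩ := I1_bounds hz0 hz1
  obtain ⟨hS0a, hS0b⟩ := S0_bounds hz0 hz1
  obtain ⟨hS1a, hS1b⟩ := S1_bounds hz0 hz1
  have hI0 : |besselI0 (γ*r) - 1| ≤ γ^2*r^2/3 := by
    rw [abs_of_nonneg hI0a]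
    calc besselI0 (γ*r) - 1 ≤ (γ*r)^2/3 := hI0b
      _ = γ^2*r^2/3 := by ring
  have hI1 : |besselI1 (γ*r)| ≤ 2*γ*r/3 := by
    rw [abs_of_nonneg hI1a]
    calc besselI1 (γ*r) ≤ 2*(γ*r)/3 := hI1b
      _ = 2*γ*r/3 := by ring
  have hS0 : |S0sum (γ*r)| ≤ γ^2*r^2/3 := by
    rw [S0sum, abs_of_nonneg hS0a]
    calc _ ≤ (γ*r)^2/3 := hS0b
      _ = γ^2*r^2/3 := by ring
  have hS1 : |S1sum (γ*r)| ≤ 4*γ*r/3 := by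
    rw [S1sum, abs_of_nonneg hS1a]
    calc _ ≤ 4*(γ*r)/3 := hS1b
      _ = 4*γ*r/3 := by ring
  -- assembly
  have hIV : |besselI0 (γ*r)*vPoly a n r - besselI1 (γ*r)*wPoly a n r - 1|
      ≤ (A*γ^2/3 + A₂ + 2*γ*B/3)*r^2 := by
    have e1 : |(besselI0 (γ*r)-1)*vPoly a n r| ≤ γ^2*r^2/3*A := by
      rw [abs_mul]; exact mul_le_mul hI0 hv (abs_nonneg _) (by positivity)
    have e2 : |besselI1 (γ*r)*wPoly a n r| ≤ (2*γ*r/3)*(B*r) := by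
      rw [abs_mul]; exact mul_le_mul hI1 hwabs (abs_nonneg _) (by positivity)
    have heq : besselI0 (γ*r)*vPoly a n r - besselI1 (γ*r)*wPoly a n r - 1
        = ((besselI0 (γ*r)-1)*vPoly a n r + (vPoly a n r - 1)) -
          besselI1 (γ*r)*wPoly a n r := by ring
    rw [heq]
    have tri1 := abs_sub ((besselI0 (γ*r)-1)*vPoly a n r + (vPoly a n r - 1))
      (besselI1 (γ*r)*wPoly a n r)
    have tri2 := abs_add_le ((besselI0 (γ*r)-1)*vPoly a n r) (vPoly a n r - 1)
    have hre : γ^2*r^2/3*A + A₂*r^2 + (2*γ*r/3)*(B*r) = (A*γ^2/3 + A₂ + 2*γ*B/3)*r^2 := by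
      ring
    linarith
  have hX1 : |(Real.log (2/γ) - Real.eulerMascheroniConstant) *
      (besselI0 (γ*r)*vPoly a n r - besselI1 (γ*r)*wPoly a n r - 1)|
      ≤ |Real.log (2/γ) - Real.eulerMascheroniConstant| * ((A*γ^2/3 + A₂ + 2*γ*B/3)*r^2) := by
    rw [abs_mul]; exact mul_le_mul_of_nonneg_left hIV hLa
  have hX2 : |S0sum (γ*r) * vPoly a n r| ≤ γ^2*r^2/3*A := by
    rw [abs_mul]; exact mul_le_mul hS0 hv (abs_nonneg _) (by positivity)
  have hX3 : |((∑ k ∈ Finset.range ((n-1)/2+1), a n (2*k+1) * r^(2*k)) - a n 1)/γ|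
      ≤ B₂*r^2/γ := by
    rw [abs_div, abs_of_pos hγ]
    gcongr
  have hX4 : |(1/2)*S1sum (γ*r)*wPoly a n r| ≤ (1/2)*(4*γ*r/3)*(B*r) := by
    rw [abs_mul, abs_mul, abs_of_nonneg (by norm_num : (0:ℝ) ≤ (1/2:ℝ))]
    exact mul_le_mul (mul_le_mul_of_nonneg_left hS1 (by norm_num)) hwabs
      (abs_nonneg _) (by positivity)
  set X1 := (Real.log (2/γ) - Real.eulerMascheroniConstant) *
    (besselI0 (γ*r)*vPoly a n r - besselI1 (γ*r)*wPoly a n r - 1) with hX1def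
  set X2 := S0sum (γ*r) * vPoly a n r with hX2def
  set X3 := ((∑ k ∈ Finset.range ((n-1)/2+1), a n (2*k+1) * r^(2*k)) - a n 1)/γ with hX3def
  set X4 := (1/2)*S1sum (γ*r)*wPoly a n r with hX4def
  have tri3 := abs_sub (X1+X2+X3) X4
  have tri4 := abs_add_le (X1+X2) X3
  have tri5 := abs_add_le X1 X2
  have hfin : |Real.log (2/γ) - Real.eulerMascheroniConstant| *
        ((A*γ^2/3 + A₂ + 2*γ*B/3)*r^2) + γ^2*r^2/3*A + B₂*r^2/γ + (1/2)*(4*γ*r/3)*(B*r)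
      = (|Real.log (2/γ) - Real.eulerMascheroniConstant| * (A*γ^2/3 + A₂ + 2*γ*B/3) +
        A*γ^2/3 + B₂/γ + 2*γ*B/3) * r^2 := by
    ring
  linarith
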